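/- Every finite simple graph G without isolated vertices satisfies Eρ(G) ≥ 1 − 2^{1−|V(G)|}, and for nonempty such G equality holds if and only if G is a star or a complete graph. -/

import Mathlib

open scoped Classical

namespace AvgCutRank

variable {V : Type*} {W : Type*}

/-- Local complementation of `G` at a vertex `v`: complement the adjacency inside
the neighborhood of `v`. -/
def localComp (G : SimpleGraph V) (v : V) : SimpleGraph V where
  Adj x y := x ≠ y ∧ (G.Adj x y ↔ ¬(G.Adj v x ∧ G.Adj v y))
  symm := by
    constructor
    rintro x y ⟨hxy, h⟩
    refine ⟨hxy.symm, ?_⟩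
    rw [G.adj_comm y x, and_comm]
    exact h
  loopless := ⟨fun x h => h.1 rfl⟩

/-- Two graphs on the same vertex set are locally equivalent if one is obtained from
the other by a sequence of local complementations. -/
def LocallyEquivalent (G H : SimpleGraph V) : Prop :=
  Relation.ReflTransGen (fun A B => ∃ v, B = localComp A v) G H

/-- `H` is (isomorphic to) a vertex-minor of `G`: `H` is isomorphic to an induced
subgraph of a graph locally equivalent to `G`. -/
def IsVertexMinor (H : SimpleGraph W) (G : SimpleGraph V) : Prop :=
  ∃ (G' : SimpleGraph V) (s : Set V), LocallyEquivalent G G' ∧ Nonempty (H ≃g G'.induce s)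

/-- The cut-rank of a set `X` of vertices: the rank over GF(2) of the `X × Xᶜ`
adjacency submatrix. -/
noncomputable def cutRank [Fintype V] [DecidableEq V] (G : SimpleGraph V)
    (X : Finset V) : ℕ :=
  (Matrix.of fun (i : X) (j : (Xᶜ : Finset V)) =>
    if G.Adj i.1 j.1 then (1 : ZMod 2) else 0).rank

/-- The average cut-rank of a graph. -/
noncomputable def avgCutRank [Fintype V] [DecidableEq V] (G : SimpleGraph V) : ℝ :=
  (∑ X : Finset V, (cutRank G X : ℝ)) / 2 ^ Fintype.card V

/-- The maximum cut-rank of a graph. -/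
noncomputable def maxCutRank [Fintype V] [DecidableEq V] (G : SimpleGraph V) : ℕ :=
  Finset.univ.sup (cutRank G)

/-- `x` and `y` are equal or twins: they have the same neighbors outside `{x, y}`. -/
def TwinEq (G : SimpleGraph V) (x y : V) : Prop :=
  x = y ∨ ∀ z, z ≠ x → z ≠ y → (G.Adj x z ↔ G.Adj y z)

/-- `x` and `y` are twins. -/
def IsTwins (G : SimpleGraph V) (x y : V) : Prop :=
  x ≠ y ∧ ∀ z, z ≠ x → z ≠ y → (G.Adj x z ↔ G.Adj y z)

/-- Neighborhood diversity: the number of twin classes. -/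
noncomputable def nd [Fintype V] [DecidableEq V] (G : SimpleGraph V) : ℕ :=
  (Finset.univ.image fun x => Finset.univ.filter fun y => TwinEq G x y).card

/-- The minimum rank of a graph over a field `F`. -/
noncomputable def minRank (F : Type*) [Field F] [Fintype V] [DecidableEq V]
    (G : SimpleGraph V) : ℕ :=
  sInf { r : ℕ | ∃ A : Matrix V V F, A.IsSymm ∧
    (∀ i j, i ≠ j → (A i j ≠ 0 ↔ G.Adj i j)) ∧ A.rank = r }

/-- The clique delta-cover number: the minimum `t` such that the edge set of `G` is the
symmetric difference of the edge sets of `t` complete graphs (given by their vertex sets). -/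
noncomputable def cliqueDeltaCover [Fintype V] [DecidableEq V] (G : SimpleGraph V) : ℕ :=
  sInf { t : ℕ | ∃ S : Fin t → Finset V, ∀ x y : V, x ≠ y →
    (G.Adj x y ↔ Odd (Finset.univ.filter fun i => x ∈ S i ∧ y ∈ S i).card) }

/-- `C` is the vertex set of an attached star in `G`: the subgraph induced on `C` is a
star (with center `c`) all of whose noncentral vertices are leaves of `G`. -/
def IsAttachedStar (G : SimpleGraph V) (C : Set V) : Prop :=
  ∃ c ∈ C, (∃ x ∈ C, x ≠ c) ∧
    ∀ x ∈ C, x ≠ c → G.Adj c x ∧ ∀ y, G.Adj x y → y = c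

/-- Deletion of a vertex: the induced subgraph on the complement of `{v}`. -/
def deleteVert (G : SimpleGraph V) (v : V) : SimpleGraph {w : V // w ≠ v} :=
  SimpleGraph.comap Subtype.val G

/-- Deletion of a finite set of vertices. -/
def deleteVerts (G : SimpleGraph V) (T : Finset V) : SimpleGraph {w : V // w ∉ T} :=
  SimpleGraph.comap Subtype.val G

/-- The star `K_{1,m}` with center `0`. -/
def starGraph (m : ℕ) : SimpleGraph (Fin (m + 1)) :=
  SimpleGraph.fromRel fun x _ => x = 0

/-- The disjoint union of three copies of `K₂`. -/
def threeK2 : SimpleGraph (Fin 6) :=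
  SimpleGraph.fromRel fun x y =>
    (x = 0 ∧ y = 1) ∨ (x = 2 ∧ y = 3) ∨ (x = 4 ∧ y = 5)

/-- The disjoint union of two paths on three vertices. -/
def twoP3 : SimpleGraph (Fin 6) :=
  SimpleGraph.fromRel fun x y =>
    (x = 0 ∧ y = 1) ∨ (x = 1 ∧ y = 2) ∨ (x = 3 ∧ y = 4) ∨ (x = 4 ∧ y = 5)

/-- The disjoint union of `K₂` and the star `K_{1,k+1}`. -/
def K2PlusStar (k : ℕ) : SimpleGraph (Fin (k + 4)) :=
  SimpleGraph.fromRel fun x y => (x.val = 0 ∧ y.val = 1) ∨ (x.val = 2 ∧ 3 ≤ y.val)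

/-- `E_k`: the star `K_{1,k+1}` with one edge subdivided. Vertex `0` is the center,
`1` is the subdivision vertex, `2` is the leaf behind it, `3, …, k+2` are leaves. -/
def Egraph (k : ℕ) : SimpleGraph (Fin (k + 3)) :=
  SimpleGraph.fromRel fun x y =>
    (x.val = 0 ∧ y.val = 1) ∨ (x.val = 1 ∧ y.val = 2) ∨ (x.val = 0 ∧ 3 ≤ y.val)

/-- Finite graphs represented on the vertex sets `Fin n`. -/
abbrev GraphOn := Σ n : ℕ, SimpleGraph (Fin n)

/-- `H` is isomorphic to an induced subgraph of `G`. -/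
def IsIndSubgraph (H G : GraphOn) : Prop :=
  ∃ s : Set (Fin G.1), Nonempty (H.2 ≃g G.2.induce s)

/-- The sequence `x_n(ε)` from the paper. -/
noncomputable def xseq (ε : ℝ) : ℕ → ℤ
  | 0 => max ⌊2 - Real.logb 2 (1 - ε)⌋ 5
  | n + 1 => 2 ^ (8 * (n + 1) + 10) *
      ⌊(xseq ε n : ℝ) - Real.logb 2 (1 - Int.fract ((2 : ℝ) ^ (xseq ε n) * ε / 2)) + 1⌋


/-! A cut `X` that splits an edge has cut-rank at least one. If every nonempty proper cut
splits an edge, this gives `∑ ρ ≥ 2^n - 2`, with equality iff all these cuts have rank exactly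
one. Otherwise some nonempty proper `A` has no edge leaving it; fixing an edge on each side of
`A`, a cut splitting both has rank at least two (the two edges form an induced matching across
it), and each edge is split by exactly half of the `2^n` cuts, so `∑ ρ ≥ 2^n`.

In the equality case, cut-rank at most one on a pair `{u, v}` means that if `u` has a
neighbour `z` that `v` lacks, then `v` is a leaf hanging at `u`. Without isolated vertices,
this makes every vertex a leaf at one common centre as soon as some leaf exists, and makes
any two vertices adjacent otherwise. -/

section MatrixRank

variable {m n : Type*} [Fintype n] {F : Type*} [Field F]

lemma le_rank_of_det_submatrix_ne_zero {k : ℕ} (A : Matrix m n F) (r : Fin k → m)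
    (c : Fin k → n) (h : (A.submatrix r c).det ≠ 0) : k ≤ A.rank := by
  simpa [Matrix.rank_of_det_ne_zero h] using A.rank_submatrix_le r c

end MatrixRank

open Finset

section CutRank

variable [Fintype V] [DecidableEq V] {G : SimpleGraph V}

lemma one_le_cutRank {X : Finset V} {x y : V} (hx : x ∈ X) (hy : y ∉ X) (hxy : G.Adj x y) :
    1 ≤ cutRank G X :=
  le_rank_of_det_submatrix_ne_zero _ ![⟨x, hx⟩] ![⟨y, mem_compl.2 hy⟩]
    (by rw [Matrix.det_fin_one]; simp [hxy])

lemma two_le_cutRank {X : Finset V} {x₁ x₂ y₁ y₂ : V} (hx₁ : x₁ ∈ X) (hx₂ : x₂ ∈ X)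
    (hy₁ : y₁ ∉ X) (hy₂ : y₂ ∉ X) (h₁₁ : G.Adj x₁ y₁) (h₂₁ : ¬G.Adj x₂ y₁)
    (h₂₂ : G.Adj x₂ y₂) : 2 ≤ cutRank G X :=
  le_rank_of_det_submatrix_ne_zero _ ![⟨x₁, hx₁⟩, ⟨x₂, hx₂⟩]
    ![⟨y₁, mem_compl.2 hy₁⟩, ⟨y₂, mem_compl.2 hy₂⟩]
    (by rw [Matrix.det_fin_two]; simp [h₁₁, h₂₁, h₂₂])

lemma cutRank_le_one_of_adj_iff {X : Finset V} (s t : V → Prop)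
    (h : ∀ x ∈ X, ∀ y ∉ X, G.Adj x y ↔ s x ∧ t y) : cutRank G X ≤ 1 := by
  unfold cutRank
  convert Matrix.rank_vecMulVec_le (fun x : X => if s x then (1 : ZMod 2) else 0)
    (fun y : (Xᶜ : Finset V) => if t y then 1 else 0)
  ext ⟨x, hx⟩ ⟨y, hy⟩
  simp only [Matrix.of_apply, Matrix.vecMulVec_apply, h x hx y (mem_compl.1 hy)]
  by_cases s x <;> by_cases t y <;> simp [*]

variable (G) in
lemma cutRank_empty : cutRank G ∅ = 0 :=
  Nat.le_zero.1 <| (Matrix.rank_le_card_height _).trans (by simp)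

variable (G) in
lemma cutRank_univ : cutRank G univ = 0 :=
  Nat.le_zero.1 <| (Matrix.rank_le_card_width _).trans (by simp)

end CutRank

section Counting

variable [Fintype V] [DecidableEq V]

lemma two_mul_card_filter_not_mem_iff_mem {a b : V} (hab : a ≠ b) :
    2 * #{X : Finset V | ¬(a ∈ X ↔ b ∈ X)} = 2 ^ Fintype.card V := by
  have hswap : #{X : Finset V | ¬(a ∈ X ↔ b ∈ X)} = #{X : Finset V | a ∈ X ↔ b ∈ X} := by
    refine card_nbij' (fun X => symmDiff X {a}) (fun X => symmDiff X {a}) ?_ ?_ ?_ ?_ <;>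
      intro X <;> simp [mem_symmDiff, hab.symm, symmDiff_symmDiff_cancel_right] <;> tauto
  have htotal := card_filter_add_card_filter_not (s := univ) fun X : Finset V => a ∈ X ↔ b ∈ X
  rw [card_univ, Fintype.card_finset] at htotal
  omega

lemma card_filter_ne_empty_ne_univ_add_two [Nonempty V] :
    #{X : Finset V | X ≠ ∅ ∧ X ≠ univ} + 2 = 2 ^ Fintype.card V := by
  have hcompl : ({X : Finset V | ¬(X ≠ ∅ ∧ X ≠ univ)} : Finset _) = {∅, univ} := by
    ext X
    simp only [mem_filter, mem_univ, true_and, mem_insert, mem_singleton]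
    tauto
  have htotal := card_filter_add_card_filter_not (s := univ)
    fun X : Finset V => X ≠ ∅ ∧ X ≠ univ
  rwa [hcompl, card_pair univ_nonempty.ne_empty.symm, card_univ, Fintype.card_finset] at htotal

end Counting

lemma exists_adj_mem_notMem_of_not_mem_iff {G : SimpleGraph V} {p : V → Prop}
    {X : Finset V} {a b : V} (ha : p a) (hb : p b) (hab : G.Adj a b)
    (hX : ¬(a ∈ X ↔ b ∈ X)) : ∃ x y, p x ∧ p y ∧ x ∈ X ∧ y ∉ X ∧ G.Adj x y := by
  by_cases haX : a ∈ X
  · exact ⟨a, b, ha, hb, haX, by tauto, hab⟩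
  · exact ⟨b, a, hb, ha, by tauto, haX, hab.symm⟩

section LowerBound

variable [Fintype V] [DecidableEq V] {G : SimpleGraph V}

lemma boole_add_boole_le_cutRank {A : Finset V} (hA : ∀ x ∈ A, ∀ y ∉ A, ¬G.Adj x y)
    {a₁ b₁ a₂ b₂ : V} (ha₁ : a₁ ∈ A) (hb₁ : b₁ ∈ A) (h₁ : G.Adj a₁ b₁)
    (ha₂ : a₂ ∉ A) (hb₂ : b₂ ∉ A) (h₂ : G.Adj a₂ b₂) (X : Finset V) :
    (if ¬(a₁ ∈ X ↔ b₁ ∈ X) then 1 else 0) + (if ¬(a₂ ∈ X ↔ b₂ ∈ X) then 1 else 0) ≤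
      cutRank G X := by
  by_cases hX₁ : a₁ ∈ X ↔ b₁ ∈ X <;> by_cases hX₂ : a₂ ∈ X ↔ b₂ ∈ X <;>
    simp only [hX₁, hX₂, not_true_eq_false, not_false_eq_true, if_true, if_false]
  · exact Nat.zero_le _
  · obtain ⟨x, y, -, -, hx, hy, hxy⟩ :=
      exists_adj_mem_notMem_of_not_mem_iff (p := (· ∉ A)) ha₂ hb₂ h₂ hX₂
    exact one_le_cutRank hx hy hxy
  · obtain ⟨x, y, -, -, hx, hy, hxy⟩ :=
      exists_adj_mem_notMem_of_not_mem_iff (p := (· ∈ A)) ha₁ hb₁ h₁ hX₁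
    exact one_le_cutRank hx hy hxy
  · obtain ⟨x₁, y₁, -, hy₁A, hx₁, hy₁, hxy₁⟩ :=
      exists_adj_mem_notMem_of_not_mem_iff (p := (· ∈ A)) ha₁ hb₁ h₁ hX₁
    obtain ⟨x₂, y₂, hx₂A, -, hx₂, hy₂, hxy₂⟩ :=
      exists_adj_mem_notMem_of_not_mem_iff (p := (· ∉ A)) ha₂ hb₂ h₂ hX₂
    exact two_le_cutRank hx₁ hx₂ hy₁ hy₂ hxy₁ (fun h => hA y₁ hy₁A x₂ hx₂A h.symm) hxy₂

lemma two_pow_card_le_sum_cutRank_of_cutRank_eq_zero (hniso : ∀ v, ∃ w, G.Adj v w)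
    {A : Finset V} (hA₀ : A ≠ ∅) (hA₁ : A ≠ univ) (hA : cutRank G A = 0) :
    2 ^ Fintype.card V ≤ ∑ X, cutRank G X := by
  have hsep : ∀ x ∈ A, ∀ y ∉ A, ¬G.Adj x y := fun x hx y hy hxy => by
    simpa [hA] using one_le_cutRank hx hy hxy
  obtain ⟨a₁, ha₁⟩ := nonempty_iff_ne_empty.2 hA₀
  obtain ⟨a₂, ha₂⟩ : ∃ a, a ∉ A := by simpa [eq_univ_iff_forall] using hA₁
  obtain ⟨b₁, h₁⟩ := hniso a₁
  obtain ⟨b₂, h₂⟩ := hniso a₂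
  have hb₁ : b₁ ∈ A := by_contra fun hb => hsep a₁ ha₁ b₁ hb h₁
  have hb₂ : b₂ ∉ A := fun hb => hsep b₂ hb a₂ ha₂ h₂.symm
  have hcount₁ := two_mul_card_filter_not_mem_iff_mem h₁.ne
  have hcount₂ := two_mul_card_filter_not_mem_iff_mem h₂.ne
  calc 2 ^ Fintype.card V
      = #{X : Finset V | ¬(a₁ ∈ X ↔ b₁ ∈ X)} + #{X : Finset V | ¬(a₂ ∈ X ↔ b₂ ∈ X)} := by
        omega
    _ = ∑ X : Finset V, ((if ¬(a₁ ∈ X ↔ b₁ ∈ X) then 1 else 0) +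
          (if ¬(a₂ ∈ X ↔ b₂ ∈ X) then 1 else 0)) := by
        rw [sum_add_distrib, card_filter, card_filter]
    _ ≤ ∑ X, cutRank G X :=
        sum_le_sum fun X _ => boole_add_boole_le_cutRank hsep ha₁ hb₁ h₁ ha₂ hb₂ h₂ X

lemma sum_cutRank_add_two_eq [Nonempty V]
    (h : ∀ X : Finset V, X ≠ ∅ → X ≠ univ → 1 ≤ cutRank G X) :
    ∑ X, cutRank G X + 2 =
      2 ^ Fintype.card V + ∑ X with X ≠ ∅ ∧ X ≠ univ, (cutRank G X - 1) := by
  have hproper : ∑ X, cutRank G X = ∑ X with X ≠ ∅ ∧ X ≠ univ, cutRank G X := by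
    refine (sum_filter_of_ne fun X _ hX => ⟨?_, ?_⟩).symm <;> rintro rfl
    exacts [hX (cutRank_empty G), hX (cutRank_univ G)]
  have hsplit : ∑ X with X ≠ ∅ ∧ X ≠ univ, cutRank G X =
      ∑ X with X ≠ ∅ ∧ X ≠ univ, (cutRank G X - 1) + #{X : Finset V | X ≠ ∅ ∧ X ≠ univ} := by
    rw [card_eq_sum_ones, ← sum_add_distrib]
    refine sum_congr rfl fun X hX => ?_
    have := h X (mem_filter.1 hX).2.1 (mem_filter.1 hX).2.2
    omega
  have := card_filter_ne_empty_ne_univ_add_two (V := V)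
  omega

theorem two_pow_card_le_sum_cutRank_add_two (hniso : ∀ v, ∃ w, G.Adj v w) :
    2 ^ Fintype.card V ≤ ∑ X, cutRank G X + 2 := by
  cases isEmpty_or_nonempty V
  · simp [Fintype.card_eq_zero]
  by_cases hconn : ∀ X : Finset V, X ≠ ∅ → X ≠ univ → 1 ≤ cutRank G X
  · rw [sum_cutRank_add_two_eq hconn]
    exact Nat.le_add_right _ _
  · simp only [not_forall, not_le, Nat.lt_one_iff] at hconn
    obtain ⟨A, hA₀, hA₁, hA⟩ := hconn
    have := two_pow_card_le_sum_cutRank_of_cutRank_eq_zero hniso hA₀ hA₁ hA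
    omega

theorem sum_cutRank_add_two_eq_two_pow_iff [Nonempty V] (hniso : ∀ v, ∃ w, G.Adj v w) :
    ∑ X, cutRank G X + 2 = 2 ^ Fintype.card V ↔
      ∀ X : Finset V, X ≠ ∅ → X ≠ univ → cutRank G X = 1 := by
  by_cases hconn : ∀ X : Finset V, X ≠ ∅ → X ≠ univ → 1 ≤ cutRank G X
  · rw [sum_cutRank_add_two_eq hconn, Nat.add_eq_left, sum_eq_zero_iff]
    simp only [mem_filter, mem_univ, true_and]
    refine forall_congr' fun X => ⟨fun h h₀ h₁ => ?_, fun h hX => by simp [h hX.1 hX.2]⟩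
    have := h ⟨h₀, h₁⟩
    have := hconn X h₀ h₁
    omega
  · simp only [not_forall, not_le, Nat.lt_one_iff] at hconn
    obtain ⟨A, hA₀, hA₁, hA⟩ := hconn
    have := two_pow_card_le_sum_cutRank_of_cutRank_eq_zero hniso hA₀ hA₁ hA
    exact iff_of_false (by omega) fun h => by simp [h A hA₀ hA₁] at hA

end LowerBound

section Classification

variable [Fintype V] [DecidableEq V] {G : SimpleGraph V}

lemma eq_of_adj_of_cutRank_pair_le_one {u v z w : V} (h : cutRank G {u, v} ≤ 1)
    (huz : G.Adj u z) (hvz : ¬G.Adj v z) (hzv : z ≠ v) (hvw : G.Adj v w) : w = u := by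
  by_contra hwu
  have := two_le_cutRank (mem_insert_self u {v}) (mem_insert_of_mem (mem_singleton_self v))
    (by simp [huz.ne', hzv]) (by simp [hwu, hvw.ne']) huz hvz hvw
  omega

lemma star_of_cutRank_le_one_of_leaf (hniso : ∀ v, ∃ w, G.Adj v w)
    (h : ∀ X, cutRank G X ≤ 1) {ℓ c : V} (hℓc : G.Adj ℓ c) (hℓ : ∀ y, G.Adj ℓ y → y = c) :
    ∀ x y, G.Adj x y ↔ (x = c ∨ y = c) ∧ x ≠ y := by
  have hleaf : ∀ x, x ≠ c → ∀ y, G.Adj x y ↔ y = c := by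
    intro x hxc y
    by_cases hxℓ : x = ℓ
    · subst hxℓ
      exact ⟨hℓ y, by rintro rfl; exact hℓc⟩
    have hℓx : ¬G.Adj ℓ x := fun hℓx => hxc (hℓ x hℓx)
    refine ⟨fun hxy => by_contra fun hyc => ?_, ?_⟩
    · have hyℓ : y ≠ ℓ := by rintro rfl; exact hℓx hxy.symm
      exact hxc (eq_of_adj_of_cutRank_pair_le_one (h _) hxy (fun hℓy => hyc (hℓ y hℓy))
        hyℓ hℓc).symm
    · rintro rfl
      by_contra hxy
      obtain ⟨w, hxw⟩ := hniso x
      have hwℓ := eq_of_adj_of_cutRank_pair_le_one (h _) hℓc hxy (Ne.symm hxc) hxw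
      exact hℓx (hwℓ ▸ hxw).symm
  intro x y
  by_cases hxc : x = c
  · subst hxc
    by_cases hyx : y = x
    · simp [hyx]
    · simp [hyx, Ne.symm hyx, G.adj_comm x y, hleaf y hyx x]
  · simp only [hleaf x hxc y, hxc, false_or, iff_self_and]
    rintro rfl
    exact hxc

lemma complete_of_cutRank_le_one_of_not_exists_leaf (hniso : ∀ v, ∃ w, G.Adj v w)
    (h : ∀ X, cutRank G X ≤ 1) (hleaf : ¬∃ ℓ c, G.Adj ℓ c ∧ ∀ y, G.Adj ℓ y → y = c) :
    ∀ x y, x ≠ y → G.Adj x y := by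
  intro u v huv
  by_contra huv'
  obtain ⟨z, huz⟩ := hniso u
  have hzv : z ≠ v := by rintro rfl; exact huv' huz
  have hvz : G.Adj v z := by
    by_contra hvz
    obtain ⟨w, hvw⟩ := hniso v
    exact huv' (eq_of_adj_of_cutRank_pair_le_one (h _) huz hvz hzv hvw ▸ hvw).symm
  exact hleaf ⟨u, z, huz, fun w huw =>
    eq_of_adj_of_cutRank_pair_le_one (h _) hvz.symm huv' (Ne.symm huv) huw⟩

lemma cutRank_eq_one_of_star {c : V} (hc : ∀ x y, G.Adj x y ↔ (x = c ∨ y = c) ∧ x ≠ y)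
    {X : Finset V} (hX₀ : X ≠ ∅) (hX₁ : X ≠ univ) : cutRank G X = 1 := by
  obtain ⟨x, hx⟩ := nonempty_iff_ne_empty.2 hX₀
  obtain ⟨y, hy⟩ : ∃ y, y ∉ X := by simpa [eq_univ_iff_forall] using hX₁
  have hne : ∀ a ∈ X, ∀ b ∉ X, a ≠ b := fun a ha b hb hab => hb (hab ▸ ha)
  by_cases hcX : c ∈ X
  · refine le_antisymm (cutRank_le_one_of_adj_iff (· = c) (fun _ => True) fun a ha b hb => ?_)
      (one_le_cutRank hcX hy ((hc c y).2 ⟨.inl rfl, hne c hcX y hy⟩))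
    simp [hc, hne a ha b hb, hne c hcX b hb |>.symm]
  · refine le_antisymm (cutRank_le_one_of_adj_iff (fun _ => True) (· = c) fun a ha b hb => ?_)
      (one_le_cutRank hx hcX ((hc x c).2 ⟨.inr rfl, hne x hx c hcX⟩))
    simp [hc, hne a ha b hb, hne a ha c hcX]

lemma cutRank_eq_one_of_complete (hG : ∀ x y, x ≠ y → G.Adj x y)
    {X : Finset V} (hX₀ : X ≠ ∅) (hX₁ : X ≠ univ) : cutRank G X = 1 := by
  obtain ⟨x, hx⟩ := nonempty_iff_ne_empty.2 hX₀
  obtain ⟨y, hy⟩ : ∃ y, y ∉ X := by simpa [eq_univ_iff_forall] using hX₁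
  have hne : ∀ a ∈ X, ∀ b ∉ X, a ≠ b := fun a ha b hb hab => hb (hab ▸ ha)
  refine le_antisymm (cutRank_le_one_of_adj_iff (fun _ => True) (fun _ => True)
    fun a ha b hb => ?_) (one_le_cutRank hx hy (hG x y (hne x hx y hy)))
  simp [hG a b (hne a ha b hb)]

theorem cutRank_eq_one_iff_star_or_complete (hniso : ∀ v, ∃ w, G.Adj v w) :
    (∀ X : Finset V, X ≠ ∅ → X ≠ univ → cutRank G X = 1) ↔
      (∃ c, ∀ x y, G.Adj x y ↔ (x = c ∨ y = c) ∧ x ≠ y) ∨ ∀ x y, x ≠ y → G.Adj x y := by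
  refine ⟨fun h => ?_, ?_⟩
  · have hle : ∀ X, cutRank G X ≤ 1 := fun X => by
      by_cases hX₀ : X = ∅
      · simp [hX₀, cutRank_empty]
      by_cases hX₁ : X = univ
      · simp [hX₁, cutRank_univ]
      exact (h X hX₀ hX₁).le
    by_cases hleaf : ∃ ℓ c, G.Adj ℓ c ∧ ∀ y, G.Adj ℓ y → y = c
    · obtain ⟨ℓ, c, hℓc, hℓ⟩ := hleaf
      exact .inl ⟨c, star_of_cutRank_le_one_of_leaf hniso hle hℓc hℓ⟩
    · exact .inr (complete_of_cutRank_le_one_of_not_exists_leaf hniso hle hleaf)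
  · rintro (⟨c, hc⟩ | hG) X hX₀ hX₁
    exacts [cutRank_eq_one_of_star hc hX₀ hX₁, cutRank_eq_one_of_complete hG hX₀ hX₁]

end Classification

lemma avgCutRank_sub_one_sub_two_zpow [Fintype V] [DecidableEq V] (G : SimpleGraph V) :
    avgCutRank G - (1 - 2 ^ (1 - (Fintype.card V : ℤ))) =
      (((∑ X, cutRank G X + 2 : ℕ) : ℝ) - ((2 ^ Fintype.card V : ℕ) : ℝ)) /
        2 ^ Fintype.card V := by
  rw [avgCutRank, zpow_sub₀ two_ne_zero, zpow_one, zpow_natCast]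
  push_cast
  field_simp
  ring

/-- A graph without isolated vertices has average cut-rank at least
`1 − 2^(1−|V(G)|)`; for nonempty such graphs equality holds iff the graph is a star
or a complete graph. -/
theorem stmt10 {V : Type} [Fintype V] [DecidableEq V] (G : SimpleGraph V)
    (hniso : ∀ v : V, ∃ w, G.Adj v w) :
    1 - (2 : ℝ) ^ (1 - (Fintype.card V : ℤ)) ≤ avgCutRank G ∧
    (Nonempty V →
      (avgCutRank G = 1 - (2 : ℝ) ^ (1 - (Fintype.card V : ℤ)) ↔
        (∃ c : V, ∀ x y : V, G.Adj x y ↔ (x = c ∨ y = c) ∧ x ≠ y) ∨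
        (∀ x y : V, x ≠ y → G.Adj x y))) := by
  have hpos : (0 : ℝ) < 2 ^ Fintype.card V := by positivity
  refine ⟨sub_nonneg.1 ?_, fun _ => ?_⟩
  · rw [avgCutRank_sub_one_sub_two_zpow]
    exact div_nonneg (sub_nonneg.2 (by exact_mod_cast two_pow_card_le_sum_cutRank_add_two hniso))
      hpos.le
  · rw [← sub_eq_zero, avgCutRank_sub_one_sub_two_zpow, div_eq_zero_iff, or_iff_left hpos.ne',
      sub_eq_zero, Nat.cast_inj, sum_cutRank_add_two_eq_two_pow_iff hniso]
    exact cutRank_eq_one_iff_star_or_complete hniso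

end AvgCutRank
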